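/- Let m = q^i with q an odd prime, p an odd prime with p ∤ m, ζ = ζ_{mp}, and I = (1 − ζ^m). For d = pq^j with 1 ≤ j ≤ i and a, a' coprime to d: (1 − ζ_d^a) ≡ (1 − ζ_d^{a'}) mod I if and only if a ≡ a' (mod q^j), where ζ_d = ζ^{mp/d} = ζ^{q^{i−j}}. -/

import Mathlib

/-!
For `ζ` a primitive `mp`-th root of unity with `p ∤ m`, the image of `ζ` modulo
`I = (1 - ζ^m)` has order exactly `m`. Its order divides `m`
because `ζ^m ≡ 1`. If it were a proper divisor, then `ζ^(m/r) ≡ 1` for some prime `r ∣ m`;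
but `ζ^(m/r)` is a primitive `rp`-th root of unity and `rp` is not a prime power, so
`1 - ζ^(m/r)` is a unit, forcing `I = ⊤`. That is impossible since `ζ^m` is a primitive `p`-th
root of unity and `∏ (1 - μ)` over those roots equals `p`, which is not a unit in `𝓞 K`.
Hence `ζ^b ≡ ζ^b' mod I` iff `b ≡ b' mod m`, and with `ζ_d = ζ^(q^(i-j))` the factor
`q^(i-j)` cancels from `q^(i-j) a ≡ q^(i-j) a' mod q^i`.
-/

open NumberField Polynomial

theorem Nat.not_isPrimePow_mul_of_prime_of_ne {r p : ℕ} (hr : r.Prime) (hp : p.Prime)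
    (hrp : r ≠ p) : ¬IsPrimePow (r * p) := by
  rw [isPrimePow_iff_unique_prime_dvd]
  rintro ⟨s, -, hs⟩
  exact hrp ((hs r ⟨hr, dvd_mul_right r p⟩).trans (hs p ⟨hp, dvd_mul_left p r⟩).symm)

theorem NumberField.RingOfIntegers.not_isUnit_natCast (K : Type*) [Field K] [NumberField K]
    {n : ℕ} (hn : 1 < n) : ¬IsUnit (n : 𝓞 K) := by
  intro hu
  have hnorm : IsUnit (RingOfIntegers.norm ℚ (algebraMap (𝓞 ℚ) (𝓞 K) (n : 𝓞 ℚ))) :=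
    (RingOfIntegers.isUnit_norm ℚ).2 (by simpa using hu)
  rw [RingOfIntegers.norm_algebraMap, Rat.RingOfIntegers.isUnit_iff] at hnorm
  have hgt : 1 < (n : ℚ) ^ Module.finrank ℚ K :=
    one_lt_pow₀ (by exact_mod_cast hn) Module.finrank_pos.ne'
  have hcast : (((n : 𝓞 ℚ) ^ Module.finrank ℚ K : 𝓞 ℚ) : ℚ) = (n : ℚ) ^ Module.finrank ℚ K := by
    push_cast
    rfl
  rw [hcast] at hnorm
  rcases hnorm with h | h <;> rw [h] at hgt <;> linarith

section

variable {R : Type*} [CommRing R] [IsDomain R]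

theorem IsPrimitiveRoot.isUnit_one_sub_of_not_isPrimePow {n : ℕ} {η : R}
    (hη : IsPrimitiveRoot η n) (hn : 1 < n) (hnp : ¬IsPrimePow n) : IsUnit (1 - η) := by
  have hpow : ∀ {r : ℕ}, r.Prime → ∀ k, r ^ k ≠ n := by
    rintro r hr (_ | k) rfl
    · exact hn.ne rfl
    · exact hnp ⟨r, k + 1, hr.prime, k.succ_pos, rfl⟩
  have hdvd := sub_dvd_eval_sub 1 η (cyclotomic n R)
  rw [IsRoot.def.1 (hη.isRoot_cyclotomic (by omega)), sub_zero,
    eval_one_cyclotomic_not_prime_pow hpow] at hdvd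
  exact isUnit_of_dvd_one hdvd

/-- `p = Φ_p(1) = ∏ (1 - μ)` over the primitive `p`-th roots `μ`, and each `1 - μ` divides `1 - ρ`
since `ρ` is a power of `μ`. -/
theorem IsPrimitiveRoot.not_isUnit_one_sub {p : ℕ} (hp : p.Prime) {ρ : R}
    (hρ : IsPrimitiveRoot ρ p) (hpR : ¬IsUnit (p : R)) : ¬IsUnit (1 - ρ) := by
  have : Fact p.Prime := ⟨hp⟩
  intro hu
  apply hpR
  rw [← eval_one_cyclotomic_prime (R := R), cyclotomic_eq_prod_X_sub_primitiveRoots hρ,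
    eval_prod, IsUnit.prod_iff]
  intro μ hμ
  obtain ⟨k, -, rfl⟩ :=
    ((mem_primitiveRoots hp.pos).1 hμ).eq_pow_of_pow_eq_one hρ.pow_eq_one
  simpa using isUnit_of_dvd_unit (one_sub_dvd_one_sub_pow μ k) hu

variable {ζ : R} {m p : ℕ}

theorem IsPrimitiveRoot.orderOf_mk_span_one_sub_pow (hζ : IsPrimitiveRoot ζ (m * p))
    (hp : p.Prime) (hm : 0 < m) (hpm : ¬p ∣ m) (hI : ¬IsUnit (1 - ζ ^ m)) :
    orderOf (Ideal.Quotient.mk (Ideal.span {1 - ζ ^ m}) ζ) = m := by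
  set I := Ideal.span {1 - ζ ^ m}
  have hpow_eq_one : ∀ {k}, Ideal.Quotient.mk I ζ ^ k = 1 ↔ 1 - ζ ^ k ∈ I := by
    intro k
    rw [← Ideal.Quotient.eq_zero_iff_mem, map_sub, map_one, map_pow, sub_eq_zero, eq_comm]
  refine orderOf_eq_of_pow_and_pow_div_prime hm (hpow_eq_one.2 (Ideal.subset_span rfl))
    fun r hr hrm h => hI ?_
  have hrp : r ≠ p := by
    rintro rfl
    exact hpm hrm
  have hroot : IsPrimitiveRoot (ζ ^ (m / r)) (r * p) :=
    hζ.pow (Nat.mul_pos hm hp.pos) (by rw [← mul_assoc, Nat.div_mul_cancel hrm])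
  have hunit := hroot.isUnit_one_sub_of_not_isPrimePow (Nat.one_lt_mul_iff.2 ⟨hr.pos, hp.pos,
    Or.inl hr.one_lt⟩) (Nat.not_isPrimePow_mul_of_prime_of_ne hr hp hrp)
  exact isUnit_of_dvd_unit (Ideal.mem_span_singleton.1 (hpow_eq_one.1 h)) hunit

theorem IsPrimitiveRoot.pow_sub_pow_mem_span_one_sub_pow_iff (hζ : IsPrimitiveRoot ζ (m * p))
    (hp : p.Prime) (hm : 0 < m) (hpm : ¬p ∣ m) (hI : ¬IsUnit (1 - ζ ^ m)) (b b' : ℕ) :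
    ζ ^ b - ζ ^ b' ∈ Ideal.span {1 - ζ ^ m} ↔ b ≡ b' [MOD m] := by
  have hord := hζ.orderOf_mk_span_one_sub_pow hp hm hpm hI
  rw [← Ideal.Quotient.eq_zero_iff_mem, map_sub, sub_eq_zero, map_pow, map_pow,
    IsOfFinOrder.pow_eq_pow_iff_modEq (orderOf_pos_iff.1 (by rw [hord]; exact hm)), hord]

end

theorem stmt_13_general (q i j p : ℕ) (hq : q.Prime) (hp : p.Prime)
    (hpm : ¬ p ∣ q ^ i) (hji : j ≤ i)
    (K : Type*) [Field K] [CharZero K]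
    [IsCyclotomicExtension {q ^ i * p} ℚ K]
    (ζ : 𝓞 K) (hζ : IsPrimitiveRoot ζ (q ^ i * p))
    (a a' : ℕ) :
    (1 - (ζ ^ q ^ (i - j)) ^ a) - (1 - (ζ ^ q ^ (i - j)) ^ a')
        ∈ Ideal.span {1 - ζ ^ q ^ i} ↔ a ≡ a' [MOD q ^ j] := by
  have : NumberField K := IsCyclotomicExtension.numberField {q ^ i * p} ℚ K
  have hI : ¬IsUnit (1 - ζ ^ q ^ i) :=
    (hζ.pow (Nat.mul_pos (pow_pos hq.pos i) hp.pos) rfl).not_isUnit_one_sub hp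
      (RingOfIntegers.not_isUnit_natCast K hp.one_lt)
  have hsplit : q ^ i = q ^ (i - j) * q ^ j := by rw [← pow_add, Nat.sub_add_cancel hji]
  calc _ ↔ ζ ^ (q ^ (i - j) * a') - ζ ^ (q ^ (i - j) * a) ∈ Ideal.span {1 - ζ ^ q ^ i} := by
        rw [pow_mul, pow_mul, sub_sub_sub_cancel_left]
    _ ↔ q ^ (i - j) * a' ≡ q ^ (i - j) * a [MOD q ^ i] :=
        hζ.pow_sub_pow_mem_span_one_sub_pow_iff hp (pow_pos hq.pos i) hpm hI _ _
    _ ↔ a ≡ a' [MOD q ^ j] := by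
        rw [hsplit, Nat.ModEq.mul_left_cancel_iff' (pow_ne_zero _ hq.ne_zero), Nat.ModEq.comm]

/-- For `m = q^i` (`q` odd prime), `p` an odd prime with `p ∤ m`,
`ζ = ζ_{mp}`, `I = (1 - ζ^m)`, `d = p*q^j` with `1 ≤ j ≤ i`, and `a, a'`
coprime to `d`: `1 - ζ_d^a ≡ 1 - ζ_d^{a'} mod I` iff `a ≡ a' (mod q^j)`,
where `ζ_d = ζ^{q^{i-j}}`. -/
theorem stmt_13 (q i j p : ℕ) (hq : q.Prime) (hqodd : q ≠ 2) (hp : p.Prime)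
    (hpodd : p ≠ 2) (hpm : ¬ p ∣ q ^ i) (hj : 1 ≤ j) (hji : j ≤ i)
    (K : Type*) [Field K] [CharZero K]
    [IsCyclotomicExtension {q ^ i * p} ℚ K]
    (ζ : 𝓞 K) (hζ : IsPrimitiveRoot ζ (q ^ i * p))
    (a a' : ℕ) (ha : Nat.Coprime a (p * q ^ j)) (ha' : Nat.Coprime a' (p * q ^ j)) :
    (1 - (ζ ^ q ^ (i - j)) ^ a) - (1 - (ζ ^ q ^ (i - j)) ^ a')
        ∈ Ideal.span {1 - ζ ^ q ^ i} ↔ a ≡ a' [MOD q ^ j] :=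
  stmt_13_general q i j p hq hp hpm hji K ζ hζ a a'
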